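/- Fix δ ∈ (0,1) and n ∈ N with k = ⌈(1-δ)(n+1)⌉ ≤ n. Under the assumptions of the exchangeable calibration theorem with almost surely distinct scores, the coverage satisfies the two-sided bound 1 - δ ≤ P(S_{n+1} ≤ S_{(k)}) = k/(n+1) ≤ 1 - δ + 1/(n+1). -/

import Mathlib

open MeasureTheory Finset
open scoped ENNReal

/-- The `k`-th order statistic (1-indexed) of the values `f 0, ..., f (n-1)`. -/
noncomputable def orderStat (n : ℕ) (f : Fin n → ℝ) (k : ℕ) : ℝ :=
  (Multiset.sort (↑(List.ofFn f) : Multiset ℝ) (· ≤ ·)).getD (k - 1) 0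

lemma card_filter_comp_perm {N : ℕ} (π : Equiv.Perm (Fin N)) (p : Fin N → Prop) [DecidablePred p] :
    (univ.filter fun i => p (π i)).card = (univ.filter fun i => p i).card := by
  rw [← Fintype.card_subtype, ← Fintype.card_subtype]
  exact Fintype.card_congr (π.subtypeEquiv fun i => Iff.rfl)

lemma card_filter_coe_lt {N c : ℕ} (h : c ≤ N) :
    (univ.filter fun i : Fin N => (i : ℕ) < c).card = c := by
  rw [← Fintype.card_subtype]
  exact Fintype.card_fin_lt_of_le h

lemma rank_sort {N : ℕ} {g : Fin N → ℝ} (hg : Function.Injective g) (m : Fin N) :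
    (univ.filter fun i => g i ≤ g (Tuple.sort g m)).card = (m : ℕ) + 1 := by
  set σ := Tuple.sort g
  have hsm : StrictMono (g ∘ σ) :=
    (Tuple.monotone_sort g).strictMono_of_injective (hg.comp (Equiv.injective σ))
  have h1 : (univ.filter fun i => g i ≤ g (σ m)).card
      = (univ.filter fun i => g (σ i) ≤ g (σ m)).card :=
    (card_filter_comp_perm σ (fun i => g i ≤ g (σ m))).symm
  rw [h1]
  have h2 : ∀ i, (g (σ i) ≤ g (σ m)) ↔ (i : ℕ) < (m : ℕ) + 1 := by
    intro i
    rw [← Function.comp_apply (f := g) (g := σ), ← Function.comp_apply (f := g) (g := σ),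
      hsm.le_iff_le, Nat.lt_succ_iff, Fin.le_iff_val_le_val]
  simp only [h2]
  exact card_filter_coe_lt (Nat.succ_le_of_lt m.isLt)

lemma card_filter_rank_le {N : ℕ} {g : Fin N → ℝ} (hg : Function.Injective g) {k : ℕ}
    (hk : k ≤ N) :
    (univ.filter fun j => (univ.filter fun i => g i ≤ g j).card ≤ k).card = k := by
  set σ := Tuple.sort g
  rw [← card_filter_comp_perm σ]
  have h2 : ∀ j, ((univ.filter fun i => g i ≤ g (σ j)).card ≤ k) ↔ (j : ℕ) < k := by
    intro j
    rw [rank_sort hg j]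
    omega
  simp only [h2]
  exact card_filter_coe_lt hk

lemma countP_ofFn {n : ℕ} (f : Fin n → ℝ) (p : ℝ → Prop) [DecidablePred p] :
    (List.ofFn f).countP (fun y => decide (p y)) = (univ.filter fun i => p (f i)).card := by
  rw [List.ofFn_eq_map, List.countP_map]
  have h1 : (univ.filter fun i => p (f i)).card
      = Multiset.card (Multiset.filter (fun i => p (f i)) (univ : Finset (Fin n)).val) := rfl
  rw [h1, ← Multiset.countP_eq_card_filter, Fin.univ_def]
  exact (Multiset.coe_countP _ _).symm

lemma le_orderStat_iff {n : ℕ} {f : Fin n → ℝ}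
    {x : ℝ} (hx : ∀ i, f i ≠ x) {k : ℕ} (hk1 : 1 ≤ k) (hkn : k ≤ n) :
    (x ≤ orderStat n f k ↔ (univ.filter fun i => f i ≤ x).card ≤ k - 1) := by
  set l := Multiset.sort (↑(List.ofFn f) : Multiset ℝ) (· ≤ ·) with hl
  have hlen : l.length = n := by
    rw [hl, Multiset.length_sort]; simp
  have hsorted : l.Pairwise (· ≤ ·) := Multiset.pairwise_sort _ _
  have hperm : l.Perm (List.ofFn f) := Multiset.coe_eq_coe.mp (Multiset.sort_eq _ _)
  have hmem : ∀ y ∈ l, ∃ i, f i = y := by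
    intro y hy
    simpa using List.mem_ofFn.mp (hperm.mem_iff.mp hy)
  have hcount : l.countP (fun y => decide (y ≤ x)) = (univ.filter fun i => f i ≤ x).card := by
    rw [hperm.countP_eq]
    exact countP_ofFn f (fun y => y ≤ x)
  have hidx : k - 1 < l.length := by omega
  have hget : orderStat n f k = l.get ⟨k-1, hidx⟩ := by
    rw [orderStat, ← hl]; exact List.getD_eq_get (l := l) (d := 0) ⟨k-1, hidx⟩
  rw [hget, ← hcount]
  constructor
  · intro hle
    have hsplit : l.countP (fun y => decide (y ≤ x))
        = (l.take (k-1)).countP (fun y => decide (y ≤ x))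
          + (l.drop (k-1)).countP (fun y => decide (y ≤ x)) := by
      conv_lhs => rw [← List.take_append_drop (k-1) l]
      rw [List.countP_append]
    have hdrop : (l.drop (k-1)).countP (fun y => decide (y ≤ x)) = 0 := by
      rw [List.countP_eq_zero]
      intro y hy
      obtain ⟨j, hj⟩ := List.mem_iff_get.mp hy
      have hgd : y = l.get ⟨k - 1 + (j : ℕ), by
          have : (j:ℕ) < l.length - (k-1) := by simpa using j.isLt
          omega⟩ := by
        rw [← hj]; simp [List.getElem_drop]
      have hge : l.get ⟨k-1, hidx⟩ ≤ y := by
        rw [hgd]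
        exact hsorted.rel_get_of_le (by simp [Fin.le_iff_val_le_val])
      simp only [decide_eq_true_eq]
      intro hyx
      have : y = x := le_antisymm hyx (le_trans hle hge)
      obtain ⟨i, hi⟩ := hmem y (List.mem_of_mem_drop hy)
      exact hx i (by rw [hi, this])
    calc l.countP (fun y => decide (y ≤ x))
        = (l.take (k-1)).countP (fun y => decide (y ≤ x)) := by rw [hsplit, hdrop]; ring
      _ ≤ (l.take (k-1)).length := List.countP_le_length
      _ ≤ k - 1 := by rw [List.length_take]; omega
  · intro hle
    by_contra hcon
    push_neg at hcon
    have htake : (l.take k).countP (fun y => decide (y ≤ x)) = (l.take k).length := by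
      rw [List.countP_eq_length]
      intro y hy
      obtain ⟨j, hj⟩ := List.mem_iff_get.mp hy
      have hjlt : (j : ℕ) < k := by
        have : (j:ℕ) < min k l.length := by simpa using j.isLt
        omega
      have : y = l.get ⟨(j:ℕ), by omega⟩ := by rw [← hj]; simp [List.getElem_take]
      have hle2 : y ≤ l.get ⟨k-1, hidx⟩ := by
        rw [this]
        exact hsorted.rel_get_of_le (by simp [Fin.le_iff_val_le_val]; omega)
      simp only [decide_eq_true_eq]
      exact le_of_lt (lt_of_le_of_lt hle2 hcon)
    have hlenk : (l.take k).length = k := by rw [List.length_take]; omega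
    have : k ≤ l.countP (fun y => decide (y ≤ x)) := by
      calc k = (l.take k).countP (fun y => decide (y ≤ x)) := by rw [htake, hlenk]
        _ ≤ l.countP (fun y => decide (y ≤ x)) := (List.take_sublist _ _).countP_le
    omega

/-- For `δ ∈ (0,1)`, `k = ⌈(1-δ)(n+1)⌉ ≤ n`, and exchangeable, almost
surely distinct scores `S₁, ..., S_{n+1}`, the coverage satisfies the two-sided bound
`1 - δ ≤ P(S_{n+1} ≤ S_{(k)}) = k/(n+1) ≤ 1 - δ + 1/(n+1)`. -/
theorem stmt_18 {Ω : Type*} [MeasurableSpace Ω] (P : Measure Ω) [IsProbabilityMeasure P]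
    (n : ℕ) (S : Fin (n + 1) → Ω → ℝ) (hmeas : ∀ i, Measurable (S i))
    (hexch : ∀ π : Equiv.Perm (Fin (n + 1)),
      Measure.map (fun ω i => S (π i) ω) P = Measure.map (fun ω i => S i ω) P)
    (hdist : ∀ᵐ ω ∂P, ∀ i j : Fin (n + 1), i ≠ j → S i ω ≠ S j ω)
    (δ : ℝ) (hδ : δ ∈ Set.Ioo (0 : ℝ) 1)
    (k : ℕ) (hk : k = ⌈(1 - δ) * (n + 1)⌉₊) (hkn : k ≤ n) :
    ENNReal.ofReal (1 - δ) ≤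
        P {ω | S (Fin.last n) ω ≤ orderStat n (fun i => S i.castSucc ω) k} ∧
      P {ω | S (Fin.last n) ω ≤ orderStat n (fun i => S i.castSucc ω) k} =
        (k : ℝ≥0∞) / (n + 1) ∧
      (k : ℝ) / (n + 1) ≤ 1 - δ + 1 / (n + 1) := by
  classical
  obtain ⟨hδ0, hδ1⟩ := hδ
  have hNpos : (0:ℝ) < (n:ℝ) + 1 := by positivity
  have hprod_pos : (0:ℝ) < (1 - δ) * ((n:ℝ) + 1) := by nlinarith
  have hk1 : 1 ≤ k := by
    rw [hk]
    exact Nat.one_le_iff_ne_zero.mpr (by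
      simp only [ne_eq, Nat.ceil_eq_zero, not_le]
      push_cast
      nlinarith)
  have hk_ge : (1 - δ) * ((n:ℝ) + 1) ≤ (k:ℝ) := by
    rw [hk]; push_cast; exact Nat.le_ceil _
  have hk_lt : (k:ℝ) < (1 - δ) * ((n:ℝ) + 1) + 1 := by
    rw [hk]; push_cast; exact Nat.ceil_lt_add_one hprod_pos.le
  -- measure-theoretic part
  set F : Ω → (Fin (n+1) → ℝ) := fun ω i => S i ω with hFdef
  have hF : Measurable F := measurable_pi_lambda _ hmeas
  set B : Fin (n+1) → Set (Fin (n+1) → ℝ) :=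
    fun j => {v | (univ.filter fun i => v i ≤ v j).card ≤ k} with hBdef
  have hrankmeas : ∀ j : Fin (n+1), Measurable fun v : Fin (n+1) → ℝ =>
      (univ.filter fun i => v i ≤ v j).card := by
    intro j
    have h : (fun v : Fin (n+1) → ℝ => (univ.filter fun i => v i ≤ v j).card)
        = fun v => ∑ i, if v i ≤ v j then 1 else 0 := by
      funext v; rw [Finset.card_filter]
    rw [h]
    exact Finset.measurable_sum _ fun i _ =>
      Measurable.ite (measurableSet_le (measurable_pi_apply i) (measurable_pi_apply j))
        measurable_const measurable_const
  have hB : ∀ j, MeasurableSet (B j) := fun j => (hrankmeas j) measurableSet_Iic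
  have hPA : ∀ j, P (F ⁻¹' B j) = P (F ⁻¹' B (Fin.last n)) := by
    intro j
    set π := Equiv.swap j (Fin.last n) with hπ
    have hπmeas : Measurable fun v : Fin (n+1) → ℝ => v ∘ π :=
      measurable_pi_lambda _ fun i => measurable_pi_apply (π i)
    have hBpre : (fun v : Fin (n+1) → ℝ => v ∘ π) ⁻¹' B (Fin.last n) = B j := by
      ext v
      simp only [Set.mem_preimage, hBdef, Set.mem_setOf_eq, Function.comp]
      rw [card_filter_comp_perm π (fun i => v i ≤ v (π (Fin.last n)))]
      rw [hπ, Equiv.swap_apply_right]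
    have hcomp : (fun v : Fin (n+1) → ℝ => v ∘ π) ∘ F = fun ω i => S (π i) ω := rfl
    calc P (F ⁻¹' B j)
        = P (((fun v : Fin (n+1) → ℝ => v ∘ π) ∘ F) ⁻¹' B (Fin.last n)) := by
          rw [Set.preimage_comp, hBpre]
      _ = Measure.map ((fun v : Fin (n+1) → ℝ => v ∘ π) ∘ F) P (B (Fin.last n)) :=
          (Measure.map_apply (hπmeas.comp hF) (hB _)).symm
      _ = Measure.map F P (B (Fin.last n)) := by rw [hcomp, hexch π]
      _ = P (F ⁻¹' B (Fin.last n)) := Measure.map_apply hF (hB _)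
  have hinj : ∀ᵐ ω ∂P, Function.Injective (F ω) := by
    filter_upwards [hdist] with ω hω
    intro i j hij
    by_contra hne
    exact hω i j hne hij
  have hsum_ind : ∀ᵐ ω ∂P,
      (∑ j : Fin (n+1), (F ⁻¹' B j).indicator (fun _ => (1:ℝ≥0∞)) ω) = (k : ℝ≥0∞) := by
    filter_upwards [hinj] with ω hω
    have h1 : ∀ j : Fin (n+1), (F ⁻¹' B j).indicator (fun _ => (1:ℝ≥0∞)) ω
        = if (univ.filter fun i => F ω i ≤ F ω j).card ≤ k then 1 else 0 := by
      intro j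
      by_cases hj : ω ∈ F ⁻¹' B j
      · rw [Set.indicator_of_mem hj]
        simp only [Set.mem_preimage, hBdef, Set.mem_setOf_eq] at hj
        rw [if_pos hj]
      · rw [Set.indicator_of_notMem hj]
        simp only [Set.mem_preimage, hBdef, Set.mem_setOf_eq] at hj
        rw [if_neg hj]
    simp only [h1]
    rw [Finset.sum_boole]
    rw [card_filter_rank_le hω (by omega)]
  have key : ((n:ℝ≥0∞)+1) * P (F ⁻¹' B (Fin.last n)) = (k : ℝ≥0∞) := by
    have hsum : ∑ j : Fin (n+1), P (F ⁻¹' B j) = (k : ℝ≥0∞) := by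
      have h2 : ∀ j : Fin (n+1), P (F ⁻¹' B j)
          = ∫⁻ ω, (F ⁻¹' B j).indicator (fun _ => (1:ℝ≥0∞)) ω ∂P := by
        intro j
        exact (lintegral_indicator_one (hF (hB j))).symm
      calc ∑ j : Fin (n+1), P (F ⁻¹' B j)
          = ∑ j : Fin (n+1), ∫⁻ ω, (F ⁻¹' B j).indicator (fun _ => (1:ℝ≥0∞)) ω ∂P := by
            exact Finset.sum_congr rfl fun j _ => h2 j
        _ = ∫⁻ ω, ∑ j : Fin (n+1), (F ⁻¹' B j).indicator (fun _ => (1:ℝ≥0∞)) ω ∂P :=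
            (lintegral_finset_sum _ fun j _ =>
              (measurable_const.indicator (hF (hB j)))).symm
        _ = ∫⁻ _, (k : ℝ≥0∞) ∂P := lintegral_congr_ae hsum_ind
        _ = (k : ℝ≥0∞) := by simp
    calc ((n:ℝ≥0∞)+1) * P (F ⁻¹' B (Fin.last n))
        = ∑ _j : Fin (n+1), P (F ⁻¹' B (Fin.last n)) := by
          rw [Finset.sum_const, Finset.card_univ, Fintype.card_fin, nsmul_eq_mul]
          push_cast
          ring
      _ = ∑ j : Fin (n+1), P (F ⁻¹' B j) := Finset.sum_congr rfl fun j _ => (hPA j).symm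
      _ = (k : ℝ≥0∞) := hsum
  have hPlast : P (F ⁻¹' B (Fin.last n)) = (k : ℝ≥0∞) / ((n:ℝ≥0∞)+1) :=
    (ENNReal.eq_div_iff (lt_of_lt_of_le one_pos le_add_self).ne' (by simp)).mpr key
  have hae : {ω | S (Fin.last n) ω ≤ orderStat n (fun i => S i.castSucc ω) k}
      =ᵐ[P] (F ⁻¹' B (Fin.last n)) := by
    rw [Filter.eventuallyEq_set]
    filter_upwards [hdist] with ω hω
    simp only [Set.mem_setOf_eq, Set.mem_preimage, hBdef]
    have hx : ∀ i : Fin n, S i.castSucc ω ≠ S (Fin.last n) ω := fun i =>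
      hω i.castSucc (Fin.last n) (Fin.castSucc_lt_last i).ne
    rw [le_orderStat_iff hx hk1 hkn]
    have hsplit : (univ.filter fun i : Fin (n+1) => F ω i ≤ F ω (Fin.last n)).card
        = (univ.filter fun i : Fin n => S i.castSucc ω ≤ S (Fin.last n) ω).card + 1 := by
      rw [Finset.card_filter, Finset.card_filter, Fin.sum_univ_castSucc]
      simp [hFdef]
    rw [hsplit]
    omega
  have hPeq : P {ω | S (Fin.last n) ω ≤ orderStat n (fun i => S i.castSucc ω) k}
      = (k : ℝ≥0∞) / ((n:ℝ≥0∞)+1) := (measure_congr hae).trans hPlast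
  have hcast : (k : ℝ≥0∞) / ((n:ℝ≥0∞)+1) = ENNReal.ofReal ((k:ℝ)/((n:ℝ)+1)) := by
    rw [ENNReal.ofReal_div_of_pos hNpos, ENNReal.ofReal_natCast]
    congr 1
    rw [ENNReal.ofReal_add (by positivity) zero_le_one, ENNReal.ofReal_natCast,
      ENNReal.ofReal_one]
  refine ⟨?_, hPeq, ?_⟩
  · rw [hPeq, hcast]
    apply ENNReal.ofReal_le_ofReal
    rw [le_div_iff₀ hNpos]
    linarith
  · rw [div_le_iff₀ hNpos]
    have h3 : (1 - δ + 1/((n:ℝ)+1)) * ((n:ℝ)+1) = (1-δ)*((n:ℝ)+1) + 1 := by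
      field_simp
    rw [h3]
    linarith
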